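/- Let η : ℝ → ℝ³ and η_m : ℝ → ℝ³ (m ∈ ℕ) be continuous 1-periodic maps such that η_m → η uniformly, η is injective on [0, 1), and there exist constants c, C > 0 and δ ∈ (0, 1/2] such that c · d₁(u, v) ≤ ‖η_m(u) − η_m(v)‖ ≤ C · d₁(u, v) for all m and all u, v with d₁(u, v) ≤ δ. Then the kernels L_m(u, v) = log ‖η_m(u) − η_m(v)‖ are uniformly integrable on [0, 1]²: each L_m is Lebesgue-integrable on [0,1]², and for every ε > 0 there exists δ' > 0 such that for every m and every measurable set A ⊆ [0, 1]² of Lebesgue measure at most δ', one has ∫_A |L_m(u, v)| du dv ≤ ε. -/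

import Mathlib

open MeasureTheory Filter Topology

/-- Circular distance on the parameter circle of circumference `L`:
`d_L(s, t) = min_{k ∈ ℤ} |s - t + k L|`. -/
noncomputable def circDist (L s t : ℝ) : ℝ := ⨅ k : ℤ, |s - t + k * L|

/-!
Everything follows from a bound on `∫∫ log² ‖ηₘ u - ηₘ v‖` over the square that is uniform in
`m`: a family bounded in `L²` on a finite measure space is uniformly integrable, because
`|t| ≤ T + t² / T`. For fixed `u`, cut `[0, 1]` into `⌈1/δ⌉` windows of length at most `δ`. On a
window let `w` minimise `v ↦ ‖ηₘ u - ηₘ v‖`; the chord-arc lower bound and the triangle inequality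
give `‖ηₘ u - ηₘ v‖ ≥ (c/2) |v - w|` on the window, and chaining the upper bound gives
`‖ηₘ u - ηₘ v‖ ≤ C`. Since `log² x ≤ log² B + 16 a^(-1/2)` for `a ≤ x ≤ B`, the integrand on the
window is dominated by `log² C + 16 (c/2)^(-1/2) |v - w|^(-1/2)`, whose integral does not depend
on `m`, `u` or the window.
-/

open Set Real
open scoped ENNReal

section SquareIntegrable

variable {α ι : Type*} [MeasurableSpace α] {μ : Measure α}

theorem lintegral_ofReal_abs_le_add_lintegral_sq_div (g : α → ℝ) {T : ℝ} (hT : 0 < T) :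
    ∫⁻ x, ENNReal.ofReal |g x| ∂μ
      ≤ ENNReal.ofReal T * μ univ + (∫⁻ x, ENNReal.ofReal (g x ^ 2) ∂μ) / ENNReal.ofReal T := by
  have hpt : ∀ x, ENNReal.ofReal |g x|
      ≤ ENNReal.ofReal T + ENNReal.ofReal (g x ^ 2) / ENNReal.ofReal T := fun x => by
    have : |g x| ≤ T + g x ^ 2 / T := by
      rw [← sub_le_iff_le_add', le_div_iff₀ hT, ← sq_abs]; nlinarith [sq_nonneg (|g x| - T)]
    rw [← ENNReal.ofReal_div_of_pos hT, ← ENNReal.ofReal_add hT.le (by positivity)]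
    exact ENNReal.ofReal_le_ofReal this
  calc ∫⁻ x, ENNReal.ofReal |g x| ∂μ
      ≤ ∫⁻ x, (ENNReal.ofReal T + ENNReal.ofReal (g x ^ 2) / ENNReal.ofReal T) ∂μ :=
        lintegral_mono hpt
    _ = _ := by
        rw [lintegral_add_left measurable_const, lintegral_const]
        simp_rw [div_eq_mul_inv]
        rw [lintegral_mul_const' _ _ (ENNReal.inv_ne_top.2 (ENNReal.ofReal_pos.2 hT).ne')]

variable {S : Set α} {g : α → ℝ} {K : ℝ≥0∞}

theorem integrableOn_of_lintegral_sq_le (hS : μ S ≠ ∞) (hg : AEStronglyMeasurable g (μ.restrict S))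
    (hK : K ≠ ∞) (hbound : ∫⁻ x in S, ENNReal.ofReal (g x ^ 2) ∂μ ≤ K) : IntegrableOn g S μ := by
  refine ⟨hg, (hasFiniteIntegral_iff_norm g).2 ?_⟩
  simp_rw [Real.norm_eq_abs]
  refine (lintegral_ofReal_abs_le_add_lintegral_sq_div g one_pos).trans_lt ?_
  rw [Measure.restrict_apply_univ, ENNReal.ofReal_one, one_mul, div_one]
  exact ENNReal.add_lt_top.2 ⟨hS.lt_top, hbound.trans_lt hK.lt_top⟩

theorem exists_forall_setIntegral_abs_le_of_lintegral_sq_le {g : ι → α → ℝ}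
    (hg : ∀ i, AEStronglyMeasurable (g i) (μ.restrict S)) (hK : K ≠ ∞)
    (hbound : ∀ i, ∫⁻ x in S, ENNReal.ofReal (g i x ^ 2) ∂μ ≤ K) {ε : ℝ} (hε : 0 < ε) :
    ∃ δ > (0 : ℝ), ∀ i A, A ⊆ S → μ A ≤ ENNReal.ofReal δ → ∫ x in A, |g i x| ∂μ ≤ ε := by
  set T := 2 * (K.toReal + 1) / ε
  have hT : 0 < T := by positivity
  refine ⟨ε / (2 * T), by positivity, fun i A hAS hA => ?_⟩
  rw [integral_eq_lintegral_of_nonneg_ae (ae_of_all _ fun _ => abs_nonneg _)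
    ((hg i).mono_measure (Measure.restrict_mono hAS le_rfl)).norm]
  refine ENNReal.toReal_le_of_le_ofReal hε.le
    ((lintegral_ofReal_abs_le_add_lintegral_sq_div (g i) hT).trans ?_)
  have hKT : K.toReal / T ≤ ε / 2 := by
    rw [div_le_iff₀ hT, show ε / 2 * T = K.toReal + 1 by simp only [T]; field_simp]
    linarith
  calc ENNReal.ofReal T * μ.restrict A univ
        + (∫⁻ x in A, ENNReal.ofReal (g i x ^ 2) ∂μ) / ENNReal.ofReal T
      ≤ ENNReal.ofReal T * ENNReal.ofReal (ε / (2 * T))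
          + ENNReal.ofReal K.toReal / ENNReal.ofReal T := by
        rw [Measure.restrict_apply_univ, ENNReal.ofReal_toReal hK]
        gcongr
        exact (lintegral_mono_set hAS).trans (hbound i)
    _ = ENNReal.ofReal (ε / 2 + K.toReal / T) := by
        rw [← ENNReal.ofReal_mul hT.le, ← ENNReal.ofReal_div_of_pos hT,
          ← ENNReal.ofReal_add (by positivity) (by positivity)]
        congr 2; field_simp
    _ ≤ ENNReal.ofReal ε := ENNReal.ofReal_le_ofReal (by linarith)

end SquareIntegrable

theorem circDist_eq_abs {s t : ℝ} (h : |s - t| ≤ 1 / 2) : circDist 1 s t = |s - t| := by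
  refine le_antisymm ?_ (le_ciInf fun k => ?_)
  · have := ciInf_le ⟨0, by rintro _ ⟨k, rfl⟩; positivity⟩ (0 : ℤ)
      (f := fun k : ℤ => |s - t + k * 1|)
    simpa [circDist] using this
  · rcases eq_or_ne k 0 with rfl | hk
    · simp
    · have hk1 : (1 : ℝ) ≤ |(k : ℝ)| := by exact_mod_cast Int.one_le_abs hk
      have := abs_add_le (s - t + k * 1) (-(s - t))
      rw [abs_neg, show s - t + k * 1 + -(s - t) = k by ring] at this
      linarith

theorem log_sq_le_of_mem_Icc {a x B : ℝ} (ha : 0 < a) (hx : x ∈ Icc a B) :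
    log x ^ 2 ≤ log B ^ 2 + 16 * a ^ (-(1 / 2 : ℝ)) := by
  have hx0 : 0 < x := ha.trans_le hx.1
  have hlog_inv : log a⁻¹ ≤ 4 * a ^ (-(1 / 4 : ℝ)) := by
    have := log_le_rpow_div (inv_pos.2 ha).le (by norm_num : (0 : ℝ) < 1 / 4)
    rwa [inv_rpow ha.le, ← rpow_neg ha.le, div_eq_mul_inv, mul_comm,
      show ((1 : ℝ) / 4)⁻¹ = 4 by norm_num] at this
  have hsq : 16 * a ^ (-(1 / 2 : ℝ)) = (4 * a ^ (-(1 / 4 : ℝ))) ^ 2 := by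
    rw [mul_pow, ← rpow_natCast (a ^ _), ← rpow_mul ha.le]; norm_num
  rcases le_total 0 (log x) with hpos | hneg
  · have := pow_le_pow_left₀ hpos (log_le_log hx0 hx.2) 2
    nlinarith [rpow_nonneg ha.le (-(1 / 2 : ℝ))]
  · have hlo : -(4 * a ^ (-(1 / 4 : ℝ))) ≤ log x := by
      rw [log_inv] at hlog_inv; linarith [log_le_log ha hx.1]
    nlinarith [sq_nonneg (log B)]

theorem setLIntegral_Icc_comp_abs_sub_le (F : ℝ → ℝ≥0∞) (w T : ℝ) :
    ∫⁻ u in Icc (w - T) (w + T), F |u - w| ≤ 2 * ∫⁻ x in Icc 0 T, F x := by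
  have hhalf : ∀ g : ℝ → ℝ, MeasurePreserving g volume volume → MeasurableEmbedding g →
      (∀ u, |u - w| = |g u|) → ∫⁻ u in g ⁻¹' Icc 0 T, F |u - w| = ∫⁻ x in Icc 0 T, F x := by
    intro g hg hge habs
    simp_rw [habs]
    rw [hg.setLIntegral_comp_preimage_emb hge (fun x => F |x|)]
    exact setLIntegral_congr_fun measurableSet_Icc fun x hx => by rw [abs_of_nonneg hx.1]
  have hcover :
      Icc (w - T) (w + T) ⊆ (fun u => w - u) ⁻¹' Icc 0 T ∪ (fun u => u - w) ⁻¹' Icc 0 T := by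
    rw [preimage_const_sub_Icc, preimage_sub_const_Icc]
    intro u hu
    rcases le_total u w with h | h
    · exact Or.inl ⟨by linarith [hu.1], by linarith⟩
    · exact Or.inr ⟨by linarith, by linarith [hu.2]⟩
  have hleft := hhalf (fun u => w - u) (Measure.measurePreserving_sub_left volume w)
    (measurableEmbedding_subLeft w) fun u => abs_sub_comm u w
  have hright := hhalf (fun u => u - w) (measurePreserving_sub_right volume w)
    (measurableEmbedding_subRight w) fun u => rfl
  calc ∫⁻ u in Icc (w - T) (w + T), F |u - w|
      ≤ ∫⁻ u in (fun u => w - u) ⁻¹' Icc 0 T ∪ (fun u => u - w) ⁻¹' Icc 0 T, F |u - w| :=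
        lintegral_mono_set hcover
    _ ≤ (∫⁻ u in (fun u => w - u) ⁻¹' Icc 0 T, F |u - w|)
        + ∫⁻ u in (fun u => u - w) ⁻¹' Icc 0 T, F |u - w| := lintegral_union_le _ _ _
    _ = 2 * ∫⁻ x in Icc 0 T, F x := by rw [hleft, hright, two_mul]

theorem setLIntegral_Icc_rpow_lt_top {r : ℝ} (hr : -1 < r) :
    ∫⁻ x in Icc (0 : ℝ) 1, ENNReal.ofReal (x ^ r) < ∞ := by
  rw [setLIntegral_congr Ioo_ae_eq_Icc.symm]
  exact ((intervalIntegral.integrableOn_Ioo_rpow_iff one_pos).2 hr).lintegral_lt_top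

theorem Icc_zero_one_subset_iUnion_Icc {N : ℕ} (hN : 0 < N) :
    Icc (0 : ℝ) 1 ⊆ ⋃ j : Fin N, Icc ((j : ℝ) / N) ((j : ℝ) / N + 1 / N) := by
  intro u hu
  have hN' : (0 : ℝ) < N := by exact_mod_cast hN
  let j : ℕ := min ⌊u * N⌋₊ (N - 1)
  have hjN : j < N := by omega
  refine mem_iUnion.2 ⟨⟨j, hjN⟩, ?_, ?_⟩
  · rw [div_le_iff₀ hN']
    exact (Nat.cast_le.2 (min_le_left _ _)).trans (Nat.floor_le (by have := hu.1; positivity))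
  · rw [← add_div, le_div_iff₀ hN']
    rcases min_choice ⌊u * N⌋₊ (N - 1) with h | h
    · simp only [j, h]; exact (Nat.lt_floor_add_one _).le
    · simp only [j, h]
      rw [Nat.cast_sub hN, Nat.cast_one, sub_add_cancel]
      nlinarith [hu.2]

noncomputable def logSqWindowBound (c B : ℝ) : ℝ≥0∞ :=
  ENNReal.ofReal (log B ^ 2) + ENNReal.ofReal (16 * (c / 2) ^ (-(1 / 2 : ℝ))) *
    (2 * ∫⁻ x in Icc (0 : ℝ) 1, ENNReal.ofReal (x ^ (-(1 / 2 : ℝ))))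

theorem logSqWindowBound_ne_top (c B : ℝ) : logSqWindowBound c B ≠ ∞ :=
  ENNReal.add_ne_top.2 ⟨ENNReal.ofReal_ne_top, ENNReal.mul_ne_top ENNReal.ofReal_ne_top
    (ENNReal.mul_ne_top ENNReal.ofNat_ne_top (setLIntegral_Icc_rpow_lt_top (by norm_num)).ne)⟩

section LogKernel

variable {E : Type*} [SeminormedAddCommGroup E] {f : ℝ → E} {c C δ : ℝ}

theorem chordArc_abs_of_circDist (hδ : δ ≤ 1 / 2)
    (h : ∀ u v, circDist 1 u v ≤ δ →
      c * circDist 1 u v ≤ ‖f u - f v‖ ∧ ‖f u - f v‖ ≤ C * circDist 1 u v)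
    (u v : ℝ) (huv : |u - v| ≤ δ) : c * |u - v| ≤ ‖f u - f v‖ ∧ ‖f u - f v‖ ≤ C * |u - v| := by
  have hd := circDist_eq_abs (huv.trans hδ)
  rw [← hd] at huv ⊢
  exact h u v huv

theorem norm_sub_le_of_forall_abs_sub_le (hδ : 0 < δ)
    (hf : ∀ u v, |u - v| ≤ δ → ‖f u - f v‖ ≤ C * |u - v|) (u v : ℝ) :
    ‖f u - f v‖ ≤ C * |u - v| := by
  set n : ℕ := ⌈|u - v| / δ⌉₊ + 1
  have hn : (0 : ℝ) < n := by positivity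
  have hstep : |u - v| / n ≤ δ := by
    rw [div_le_iff₀ hn, ← div_le_iff₀' hδ]
    exact (Nat.le_ceil _).trans (by simp [n])
  let x : ℕ → ℝ := fun i => u + i * ((v - u) / n)
  have hx : ∀ i, |x i - x (i + 1)| = |u - v| / n := by
    intro i
    rw [show x i - x (i + 1) = (u - v) / n by push_cast [x]; ring, abs_div, abs_of_pos hn]
  calc ‖f u - f v‖ = dist (f (x 0)) (f (x n)) := by
        simp [x, dist_eq_norm, mul_div_cancel₀ _ hn.ne']
    _ ≤ ∑ i ∈ Finset.range n, dist (f (x i)) (f (x (i + 1))) :=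
        dist_le_range_sum_dist (fun i => f (x i)) n
    _ ≤ ∑ _i ∈ Finset.range n, C * (|u - v| / n) :=
        Finset.sum_le_sum fun i _ => by
          rw [dist_eq_norm, ← hx i]; exact hf _ _ ((hx i).symm ▸ hstep)
    _ = C * |u - v| := by
        rw [Finset.sum_const, Finset.card_range, nsmul_eq_mul]; field_simp

theorem exists_forall_mul_abs_sub_le_norm_sub {s : Set ℝ} (hs : IsCompact s)
    (hne : s.Nonempty) (hf : ContinuousOn f s)
    (hlow : ∀ u ∈ s, ∀ w ∈ s, c * |u - w| ≤ ‖f u - f w‖) (y : E) :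
    ∃ w ∈ s, ∀ u ∈ s, c / 2 * |u - w| ≤ ‖y - f u‖ := by
  obtain ⟨w, hw, hmin⟩ := hs.exists_isMinOn hne (continuousOn_const.sub hf).norm
  refine ⟨w, hw, fun u hu => ?_⟩
  have hwu : ‖y - f w‖ ≤ ‖y - f u‖ := hmin hu
  have := norm_sub_le_norm_sub_add_norm_sub (f u) y (f w)
  rw [norm_sub_rev (f u) y] at this
  linarith [hlow u hu w hw]

theorem measurable_log_norm_sub (hf : Continuous f) :
    Measurable fun q : ℝ × ℝ => log ‖f q.1 - f q.2‖ :=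
  ((hf.comp continuous_fst).sub (hf.comp continuous_snd)).norm.measurable.log

theorem setLIntegral_log_sq_norm_sub_le_of_window (hf : Continuous f) {B α ℓ : ℝ} (hc : 0 < c)
    (hℓ : ℓ ∈ Icc 0 1)
    (hlow : ∀ u ∈ Icc α (α + ℓ), ∀ w ∈ Icc α (α + ℓ), c * |u - w| ≤ ‖f u - f w‖)
    {y : E} (hup : ∀ v ∈ Icc α (α + ℓ), ‖y - f v‖ ≤ B) :
    ∫⁻ v in Icc α (α + ℓ), ENNReal.ofReal (log ‖y - f v‖ ^ 2) ≤ logSqWindowBound c B := by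
  obtain ⟨w, hw, hmin⟩ := exists_forall_mul_abs_sub_le_norm_sub isCompact_Icc
    (nonempty_Icc.2 (by linarith [hℓ.1])) hf.continuousOn hlow y
  set K : ℝ := 16 * (c / 2) ^ (-(1 / 2 : ℝ))
  have hpt : ∀ᵐ v ∂volume.restrict (Icc α (α + ℓ)), ENNReal.ofReal (log ‖y - f v‖ ^ 2)
      ≤ ENNReal.ofReal (log B ^ 2)
        + ENNReal.ofReal K * ENNReal.ofReal (|v - w| ^ (-(1 / 2 : ℝ))) := by
    filter_upwards [ae_restrict_mem measurableSet_Icc, ae_restrict_of_ae (volume.ae_ne w)]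
      with v hv hvw
    have hpos : 0 < c / 2 * |v - w| := by have := sub_ne_zero.2 hvw; positivity
    have := log_sq_le_of_mem_Icc hpos ⟨hmin v hv, hup v hv⟩
    rw [mul_rpow (by positivity) (abs_nonneg _), ← mul_assoc] at this
    rw [← ENNReal.ofReal_mul (by positivity), ← ENNReal.ofReal_add (sq_nonneg _) (by positivity)]
    exact ENNReal.ofReal_le_ofReal this
  have hvol : volume (Icc α (α + ℓ)) ≤ 1 := by
    rw [Real.volume_Icc, add_sub_cancel_left]; exact ENNReal.ofReal_le_one.2 hℓ.2
  have hsing : ∫⁻ v in Icc α (α + ℓ), ENNReal.ofReal (|v - w| ^ (-(1 / 2 : ℝ)))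
      ≤ 2 * ∫⁻ x in Icc (0 : ℝ) 1, ENNReal.ofReal (x ^ (-(1 / 2 : ℝ))) := by
    refine (lintegral_mono_set ?_).trans
      (setLIntegral_Icc_comp_abs_sub_le (fun x => ENNReal.ofReal (x ^ (-(1 / 2 : ℝ)))) w 1)
    exact Icc_subset_Icc (by linarith [hw.2, hℓ.2]) (by linarith [hw.1, hℓ.2])
  calc ∫⁻ v in Icc α (α + ℓ), ENNReal.ofReal (log ‖y - f v‖ ^ 2)
      ≤ ∫⁻ v in Icc α (α + ℓ), (ENNReal.ofReal (log B ^ 2)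
          + ENNReal.ofReal K * ENNReal.ofReal (|v - w| ^ (-(1 / 2 : ℝ)))) := lintegral_mono_ae hpt
    _ = ENNReal.ofReal (log B ^ 2) * volume (Icc α (α + ℓ))
          + ENNReal.ofReal K
            * ∫⁻ v in Icc α (α + ℓ), ENNReal.ofReal (|v - w| ^ (-(1 / 2 : ℝ))) := by
        rw [lintegral_add_left measurable_const, setLIntegral_const,
          lintegral_const_mul' _ _ ENNReal.ofReal_ne_top]
    _ ≤ logSqWindowBound c B := by
        unfold logSqWindowBound
        gcongr
        exact mul_le_of_le_one_right' hvol

theorem setLIntegral_Icc_log_sq_norm_sub_le (hf : Continuous f) (hc : 0 < c) (hC : 0 ≤ C)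
    (hδ : 0 < δ)
    (hca : ∀ u v, |u - v| ≤ δ → c * |u - v| ≤ ‖f u - f v‖ ∧ ‖f u - f v‖ ≤ C * |u - v|)
    {u : ℝ} (hu : u ∈ Icc 0 1) :
    ∫⁻ v in Icc 0 1, ENNReal.ofReal (log ‖f u - f v‖ ^ 2) ≤ ⌈1 / δ⌉₊ * logSqWindowBound c C := by
  set N := ⌈1 / δ⌉₊
  have hN : 0 < N := Nat.ceil_pos.2 (by positivity)
  have hN' : (0 : ℝ) < N := by exact_mod_cast hN
  have hNδ : 1 / (N : ℝ) ≤ δ := by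
    rw [div_le_iff₀ hN', ← div_le_iff₀' hδ]; exact Nat.le_ceil _
  have hwindow : ∀ j : Fin N, ∫⁻ v in Icc ((j : ℝ) / N) ((j : ℝ) / N + 1 / N),
      ENNReal.ofReal (log ‖f u - f v‖ ^ 2) ≤ logSqWindowBound c C := by
    intro j
    have hj : (j : ℝ) / N + 1 / N ≤ 1 := by
      rw [← add_div, div_le_one hN']; exact_mod_cast j.2
    refine setLIntegral_log_sq_norm_sub_le_of_window hf hc
      ⟨by positivity, (div_le_one hN').2 (by exact_mod_cast hN)⟩ ?_ ?_
    · intro v hv w hw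
      have := Real.dist_le_of_mem_Icc hv hw
      rw [add_sub_cancel_left, Real.dist_eq] at this
      exact (hca v w (this.trans hNδ)).1
    · intro v hv
      have hv01 : v ∈ Icc (0 : ℝ) 1 := ⟨by linarith [hv.1, show (0 : ℝ) ≤ j / N by positivity],
        hv.2.trans hj⟩
      have huv : |u - v| ≤ 1 := by
        simpa [Real.dist_eq] using Real.dist_le_of_mem_Icc_01 hu hv01
      calc ‖f u - f v‖ ≤ C * |u - v| :=
            norm_sub_le_of_forall_abs_sub_le hδ (fun u v h => (hca u v h).2) u v
        _ ≤ C := mul_le_of_le_one_right hC huv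
  calc ∫⁻ v in Icc 0 1, ENNReal.ofReal (log ‖f u - f v‖ ^ 2)
      ≤ ∫⁻ v in ⋃ j : Fin N, Icc ((j : ℝ) / N) ((j : ℝ) / N + 1 / N),
          ENNReal.ofReal (log ‖f u - f v‖ ^ 2) :=
        lintegral_mono_set (Icc_zero_one_subset_iUnion_Icc hN)
    _ ≤ ∑' j : Fin N, ∫⁻ v in Icc ((j : ℝ) / N) ((j : ℝ) / N + 1 / N),
          ENNReal.ofReal (log ‖f u - f v‖ ^ 2) := lintegral_iUnion_le _ _
    _ ≤ ∑' _j : Fin N, logSqWindowBound c C := ENNReal.tsum_le_tsum hwindow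
    _ = N * logSqWindowBound c C := by simp

theorem setLIntegral_Icc_prod_log_sq_norm_sub_le (hf : Continuous f) (hc : 0 < c) (hC : 0 ≤ C)
    (hδ : 0 < δ)
    (hca : ∀ u v, |u - v| ≤ δ → c * |u - v| ≤ ‖f u - f v‖ ∧ ‖f u - f v‖ ≤ C * |u - v|) :
    ∫⁻ q in Icc 0 1 ×ˢ Icc 0 1, ENNReal.ofReal (log ‖f q.1 - f q.2‖ ^ 2)
      ≤ ⌈1 / δ⌉₊ * logSqWindowBound c C := by
  rw [Measure.volume_eq_prod, setLIntegral_prod _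
    ((measurable_log_norm_sub hf).pow_const 2).ennreal_ofReal.aemeasurable]
  calc ∫⁻ u in Icc 0 1, ∫⁻ v in Icc 0 1, ENNReal.ofReal (log ‖f u - f v‖ ^ 2)
      ≤ ∫⁻ _u in Icc (0 : ℝ) 1, ⌈1 / δ⌉₊ * logSqWindowBound c C :=
        setLIntegral_mono' measurableSet_Icc fun u hu =>
          setLIntegral_Icc_log_sq_norm_sub_le hf hc hC hδ hca hu
    _ = ⌈1 / δ⌉₊ * logSqWindowBound c C := by simp

end LogKernel

theorem uniform_integrability_log_kernels_general
    (ηm : ℕ → ℝ → EuclideanSpace ℝ (Fin 3))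
    (hηm : ∀ m, Continuous (ηm m))
    (c C δ : ℝ) (hc : 0 < c) (hC : 0 < C) (hδ : δ ∈ Set.Ioc (0:ℝ) (1/2))
    (hchordarc : ∀ m, ∀ u v : ℝ, circDist 1 u v ≤ δ →
      c * circDist 1 u v ≤ ‖ηm m u - ηm m v‖ ∧
        ‖ηm m u - ηm m v‖ ≤ C * circDist 1 u v) :
    (∀ m, IntegrableOn (fun q : ℝ × ℝ => Real.log ‖ηm m q.1 - ηm m q.2‖)
        (Set.Icc 0 1 ×ˢ Set.Icc 0 1) volume) ∧
      ∀ ε > (0:ℝ), ∃ δ' > (0:ℝ), ∀ m, ∀ A : Set (ℝ × ℝ),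
        MeasurableSet A → A ⊆ Set.Icc 0 1 ×ˢ Set.Icc 0 1 →
        volume A ≤ ENNReal.ofReal δ' →
        ∫ q in A, |Real.log ‖ηm m q.1 - ηm m q.2‖| ≤ ε := by
  have hmeas : ∀ m, AEStronglyMeasurable (fun q : ℝ × ℝ => log ‖ηm m q.1 - ηm m q.2‖)
      (volume.restrict (Icc 0 1 ×ˢ Icc 0 1)) := fun m =>
    (measurable_log_norm_sub (hηm m)).aestronglyMeasurable
  have hbound := fun m => setLIntegral_Icc_prod_log_sq_norm_sub_le (hηm m) hc hC.le hδ.1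
    (chordArc_abs_of_circDist hδ.2 (hchordarc m))
  have hK : (⌈1 / δ⌉₊ : ℝ≥0∞) * logSqWindowBound c C ≠ ∞ :=
    ENNReal.mul_ne_top (ENNReal.natCast_ne_top _) (logSqWindowBound_ne_top c C)
  refine ⟨fun m => integrableOn_of_lintegral_sq_le
    (isCompact_Icc.prod isCompact_Icc).measure_lt_top.ne (hmeas m) hK (hbound m), fun ε hε => ?_⟩
  obtain ⟨δ', hδ', h⟩ := exists_forall_setIntegral_abs_le_of_lintegral_sq_le hmeas hK hbound hε
  exact ⟨δ', hδ', fun m A _ hAS hA => h m A hAS hA⟩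

theorem uniform_integrability_log_kernels
    (η : ℝ → EuclideanSpace ℝ (Fin 3)) (ηm : ℕ → ℝ → EuclideanSpace ℝ (Fin 3))
    (hη : Continuous η) (hηm : ∀ m, Continuous (ηm m))
    (hperη : ∀ u, η (u + 1) = η u) (hperηm : ∀ m u, ηm m (u + 1) = ηm m u)
    (hconv : TendstoUniformly ηm η atTop)
    (hinj : Set.InjOn η (Set.Ico 0 1))
    (c C δ : ℝ) (hc : 0 < c) (hC : 0 < C) (hδ : δ ∈ Set.Ioc (0:ℝ) (1/2))
    (hchordarc : ∀ m, ∀ u v : ℝ, circDist 1 u v ≤ δ →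
      c * circDist 1 u v ≤ ‖ηm m u - ηm m v‖ ∧
        ‖ηm m u - ηm m v‖ ≤ C * circDist 1 u v) :
    (∀ m, IntegrableOn (fun q : ℝ × ℝ => Real.log ‖ηm m q.1 - ηm m q.2‖)
        (Set.Icc 0 1 ×ˢ Set.Icc 0 1) volume) ∧
      ∀ ε > (0:ℝ), ∃ δ' > (0:ℝ), ∀ m, ∀ A : Set (ℝ × ℝ),
        MeasurableSet A → A ⊆ Set.Icc 0 1 ×ˢ Set.Icc 0 1 →
        volume A ≤ ENNReal.ofReal δ' →
        ∫ q in A, |Real.log ‖ηm m q.1 - ηm m q.2‖| ≤ ε :=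
  uniform_integrability_log_kernels_general ηm hηm c C δ hc hC hδ hchordarc
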